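/- arXiv:2107.13861 — 2 statements merged into one kernel-verified Lean document; each statement's English description precedes it below -/
import Mathlib

section
/- Let τ = (1,n+1)(2,n+2)⋯(n,2n) ∈ S_{2n}. If σ ∈ S_{2n} satisfies τστ⁻¹ = σ⁻¹, then for every cycle c in the cycle decomposition of σ, either there is a different cycle c' of σ with c' = τc⁻¹τ, or c has even length 2k and has the form (u₁ … u_k τ(u_k) … τ(u₁)). -/
set_option linter.unnecessarySeqFocus false

open Equiv Equiv.Perm

/-- The fixed-point-free involution `τ = (1,n+1)(2,n+2)⋯(n,2n)` of `Fin (2n)`,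
sending `i ↦ i+n` for `i ≤ n` and `i ↦ i−n` for `i > n` (0-indexed). -/
def tau (n : ℕ) : Equiv.Perm (Fin (2 * n)) where
  toFun i := if h : (i : ℕ) < n then ⟨i + n, by omega⟩ else ⟨i - n, by have := i.isLt; omega⟩
  invFun i := if h : (i : ℕ) < n then ⟨i + n, by omega⟩ else ⟨i - n, by have := i.isLt; omega⟩
  left_inv := by
    rintro ⟨v, hv⟩
    by_cases h : v < n <;> simp [h] <;> split <;> (try omega) <;> (apply Fin.ext; simp <;> omega)
  right_inv := by
    rintro ⟨v, hv⟩
    by_cases h : v < n <;> simp [h] <;> split <;> (try omega) <;> (apply Fin.ext; simp <;> omega)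

/-!
Conjugation by `τ` composed with inversion permutes the cycles of `σ`, sending `c` to
`τ c⁻¹ τ⁻¹`. If `c` is fixed by this, `τ` preserves the support of `c` and, writing
`τ x = c^t x`, acts on it as the reflection `c^j x ↦ c^(t-j) x`. As `τ` has no fixed points,
`2j ≢ t` modulo the length `m` of `c` for every `j`, which forces `m` even and `t` odd.
Started at `y = c^((t+1)/2) x`, the cycle `(y, c y, …, c^(m-1) y)` is then reversed by `τ`,
so it has the form `(u₁ … u_k τ(u_k) … τ(u₁))`.
-/

theorem tau_inv (n : ℕ) : (tau n)⁻¹ = tau n := rfl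

theorem tau_apply_ne (n : ℕ) (x : Fin (2 * n)) : tau n x ≠ x := by
  intro hx
  have := congrArg Fin.val hx
  simp only [tau, Equiv.coe_fn_mk] at this
  split at this <;> simp only at this <;> omega

theorem List.take_append_reverse_map_take {α : Type*} {f : α → α} {l : List α} {k : ℕ}
    (hl : l.length = 2 * k) (hf : l.map f = l.reverse) :
    l.take k ++ (l.take k).reverse.map f = l := by
  conv_rhs => rw [← List.take_append_drop k l]
  rw [List.map_reverse, List.map_take, hf, List.take_reverse, List.reverse_reverse, hl]
  congr 2
  omega

namespace Equiv.Perm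

variable {α : Type*}

theorem apply_zpow_apply_of_conj_eq_inv {τ c : Perm α} (h : τ * c * τ⁻¹ = c⁻¹)
    (j : ℤ) (x : α) : τ ((c ^ j) x) = (c ^ (-j)) (τ x) := by
  have hj : τ * c ^ j * τ⁻¹ = c ^ (-j) := by rw [← conj_zpow, h, inv_zpow']
  simpa [mul_apply] using congrArg (· (τ x)) hj

variable [DecidableEq α] [Fintype α]

theorem inv_mem_cycleFactorsFinset_inv {σ c : Perm α} (hc : c ∈ σ.cycleFactorsFinset) :
    c⁻¹ ∈ σ⁻¹.cycleFactorsFinset := by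
  obtain ⟨x, hx⟩ := (mem_cycleFactorsFinset_iff.1 hc).1.nonempty_support
  rw [(eq_cycleOf_of_mem_cycleFactorsFinset_iff σ c hc x).2 hx, cycleOf_inv]
  convert cycleOf_mem_cycleFactorsFinset_iff.2 ?_
  rw [support_inv]
  exact mem_cycleFactorsFinset_support_le hc hx

theorem conj_inv_mem_cycleFactorsFinset {σ τ c : Perm α} (h : τ * σ * τ⁻¹ = σ⁻¹)
    (hc : c ∈ σ.cycleFactorsFinset) : τ * c⁻¹ * τ⁻¹ ∈ σ.cycleFactorsFinset := by
  have hσ : τ * σ⁻¹ * τ⁻¹ = σ := by rw [← conj_inv, h, inv_inv]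
  rw [← hσ, mem_cycleFactorsFinset_conj]
  exact inv_mem_cycleFactorsFinset_inv hc

theorem IsCycle.isCycleOn_support {c : Perm α} (hc : c.IsCycle) : c.IsCycleOn c.support := by
  rw [coe_support_eq_set_support]
  exact hc.isCycleOn

theorem IsCycle.exists_apply_eq_inv_apply_of_conj_eq_inv {τ c : Perm α} (hc : c.IsCycle)
    (h : τ * c * τ⁻¹ = c⁻¹) (hτ : ∀ x ∈ c.support, τ x ≠ x) :
    Even c.support.card ∧ ∃ y ∈ c.support, τ y = c⁻¹ y := by
  have hcyc := hc.isCycleOn_support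
  obtain ⟨x, hx⟩ := hc.nonempty_support
  have hτx : τ x ∈ c.support := by
    have : τ x ∈ (τ * c * τ⁻¹).support := by
      rw [support_conj]
      exact Finset.mem_map_of_mem _ hx
    rwa [h, support_inv] at this
  obtain ⟨t, ht⟩ := hc.exists_zpow_eq (mem_support.1 hx) (mem_support.1 hτx)
  have hrefl : ∀ j : ℤ, τ ((c ^ j) x) = (c ^ (t - j)) x := by
    intro j
    rw [apply_zpow_apply_of_conj_eq_inv h, ← ht, ← mul_apply, ← zpow_add, neg_add_eq_sub]
  have hnot : ∀ j : ℤ, ¬ 2 * j ≡ t [ZMOD c.support.card] := by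
    intro j hj
    apply hτ _ (zpow_apply_mem_support.2 hx)
    rw [hrefl, hcyc.zpow_apply_eq_zpow_apply hx]
    simpa [two_mul] using hj.symm.sub_right j
  obtain ⟨u, rfl⟩ : Odd t := by
    by_contra ht_even
    obtain ⟨u, rfl⟩ := Int.not_odd_iff_even.1 ht_even
    exact hnot u (by rw [two_mul])
  refine ⟨?_, (c ^ (u + 1)) x, zpow_apply_mem_support.2 hx, ?_⟩
  · by_contra hm
    have hm_odd : Odd (c.support.card : ℤ) := (Int.odd_coe_nat _).2 (Nat.not_even_iff_odd.1 hm)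
    obtain ⟨u', hu'⟩ := (odd_two_mul_add_one u).sub_odd hm_odd
    exact hnot u' (Int.modEq_iff_dvd.2 ⟨1, by omega⟩)
  · rw [hrefl, ← mul_apply, ← zpow_neg_one, ← zpow_add]
    congr 2
    ring

theorem IsCycle.map_toList_eq_reverse {τ c : Perm α} {y : α} (hc : c.IsCycle)
    (h : τ * c * τ⁻¹ = c⁻¹) (hy : y ∈ c.support) (hτy : τ y = c⁻¹ y) :
    (c.toList y).map τ = (c.toList y).reverse := by
  have hcyc := hc.isCycleOn_support
  have hlen : (c.toList y).length = c.support.card := by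
    rw [length_toList, hc.cycleOf_eq (mem_support.1 hy)]
  refine List.ext_getElem (by simp) fun i hi _ ↦ ?_
  rw [List.getElem_map, List.getElem_reverse, getElem_toList, getElem_toList, ← zpow_natCast,
    apply_zpow_apply_of_conj_eq_inv h, hτy, ← mul_apply, ← zpow_neg_one, ← zpow_add,
    ← zpow_natCast, hcyc.zpow_apply_eq_zpow_apply hy]
  simp only [List.length_map] at hi
  exact Int.modEq_iff_dvd.2 ⟨1, by omega⟩

end Equiv.Perm

/-- If `τστ⁻¹ = σ⁻¹`, then every cycle `c` of `σ` either has a distinct `τ`-symmetric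
partner cycle `c' = τc⁻¹τ` in the cycle decomposition of `σ`, or `c` is
`τ`-self-symmetric: it has even length `2k` and the form `(u₁ … u_k τ(u_k) … τ(u₁))`. -/
theorem twisted_centralizer_cycles (n : ℕ) (σ : Equiv.Perm (Fin (2 * n)))
    (h : tau n * σ * (tau n)⁻¹ = σ⁻¹) :
    ∀ c ∈ σ.cycleFactorsFinset,
      (∃ c' ∈ σ.cycleFactorsFinset, c' ≠ c ∧ c' = tau n * c⁻¹ * tau n) ∨
      (∃ (k : ℕ) (l : List (Fin (2 * n))), 0 < k ∧ l.length = k ∧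
        (l ++ l.reverse.map (tau n)).Nodup ∧
        c.support.card = 2 * k ∧
        c = (l ++ l.reverse.map (tau n)).formPerm) := by
  intro c hc
  by_cases hsym : tau n * c⁻¹ * tau n = c
  · right
    have hcyc := (mem_cycleFactorsFinset_iff.1 hc).1
    have hconj : tau n * c * (tau n)⁻¹ = c⁻¹ := by
      conv_rhs => rw [← hsym]
      simp only [mul_inv_rev, inv_inv, tau_inv, mul_assoc]
    obtain ⟨⟨k, hk⟩, y, hy, hτy⟩ :=
      hcyc.exists_apply_eq_inv_apply_of_conj_eq_inv hconj fun x _ ↦ tau_apply_ne n x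
    have hL : (c.toList y).length = 2 * k := by
      rw [length_toList, hcyc.cycleOf_eq (mem_support.1 hy), hk, two_mul]
    have hsplit := List.take_append_reverse_map_take hL (hcyc.map_toList_eq_reverse hconj hy hτy)
    refine ⟨k, (c.toList y).take k, ?_, by simp [hL]; omega, ?_, by omega, ?_⟩
    · have := hcyc.two_le_card_support
      omega
    · rw [hsplit]
      exact nodup_toList c y
    · rw [hsplit, formPerm_toList, hcyc.cycleOf_eq (mem_support.1 hy)]
  · exact Or.inl ⟨_, conj_inv_mem_cycleFactorsFinset h hc, hsym, rfl⟩
end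

section
/- Let τ ∈ S_{2n} be the fixed-point-free involution i ↦ i±n, let u ∈ S_{2n} satisfy τuτ⁻¹ = u⁻¹ with no τ-self-symmetric cycles, and suppose the τ-symmetric cycle pairs of u have lengths λ₁,…,λ_s. Then as a permutation of S_{2n}, u has cycle type (λ₁, λ₁, λ₂, λ₂, …, λ_s, λ_s), where each part of the partition λ of n is repeated twice, and λ₁+…+λ_s = n. -/
set_option linter.unnecessarySeqFocus false

open Equiv Equiv.Perm

/-- Length of the cycle of `u` through `x` (fixed points counting as length-1 cycles). -/
def cycLen {N : ℕ} (u : Equiv.Perm (Fin N)) (x : Fin N) : ℕ :=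
  max 1 (u.cycleOf x).support.card

set_option maxHeartbeats 1000000

/-- If `τuτ⁻¹ = u⁻¹`, `u` has no `τ`-self-symmetric cycles, and the `τ`-symmetric cycle
pairs of `u` (represented by points `x 1, …, x s`, one per pair) have lengths
`λ₁,…,λ_s`, then `λ₁+…+λ_s = n` and the cycle type of `u` as a permutation of `2n`
points consists of each part of `λ` repeated twice (parts equal to `1` corresponding to
pairs of fixed points, which do not enter `Equiv.Perm.cycleType`). -/
theorem twisted_cycle_type_doubled (n s : ℕ) (u : Equiv.Perm (Fin (2 * n)))
    (lam : Fin s → ℕ)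
    (h1 : tau n * u * (tau n)⁻¹ = u⁻¹)
    (h2 : ∀ c ∈ u.cycleFactorsFinset, tau n * c⁻¹ * tau n ≠ c)
    (x : Fin s → Fin (2 * n))
    (hx1 : ∀ i j, i ≠ j →
      ¬u.SameCycle (x i) (x j) ∧ ¬u.SameCycle (x i) (tau n (x j)))
    (hx2 : ∀ i, ¬u.SameCycle (x i) (tau n (x i)))
    (hx3 : ∀ y, ∃ i, u.SameCycle y (x i) ∨ u.SameCycle y (tau n (x i)))
    (hlen : ∀ i, cycLen u (x i) = lam i) :
    (∑ i, lam i = n) ∧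
    u.cycleType =
      Multiset.filter (2 ≤ ·) (Finset.univ.val.map lam) +
      Multiset.filter (2 ≤ ·) (Finset.univ.val.map lam) := by
  have htau2 : ∀ a, tau n (tau n a) = a := fun a => (tau n).left_inv a
  -- conjugation by τ preserves SameCycle
  have hA1 : ∀ a b, u.SameCycle a b → u.SameCycle (tau n a) (tau n b) := by
    intro a b h
    have h' := h.conj (g := tau n)
    rw [h1] at h'
    exact sameCycle_inv.mp h'
  have hA : ∀ a b, u.SameCycle (tau n a) (tau n b) ↔ u.SameCycle a b := by
    intro a b
    refine ⟨fun h => ?_, hA1 a b⟩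
    have := hA1 _ _ h
    rwa [htau2, htau2] at this
  -- representatives
  set X : Fin s × Bool → Fin (2 * n) :=
    fun p => cond p.2 (tau n (x p.1)) (x p.1) with hX
  have hXf : ∀ i, X (i, false) = x i := fun i => rfl
  have hXt : ∀ i, X (i, true) = tau n (x i) := fun i => rfl
  have hpair : ∀ p q : Fin s × Bool, p ≠ q → ¬ u.SameCycle (X p) (X q) := by
    rintro ⟨i, bi⟩ ⟨j, bj⟩ hpq hsc
    by_cases hij : i = j
    · subst hij
      cases bi <;> cases bj
      · exact hpq rfl
      · rw [hXf, hXt] at hsc; exact hx2 i hsc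
      · rw [hXf, hXt] at hsc; exact hx2 i hsc.symm
      · exact hpq rfl
    · cases bi <;> cases bj
      · rw [hXf, hXf] at hsc; exact (hx1 i j hij).1 hsc
      · rw [hXf, hXt] at hsc; exact (hx1 i j hij).2 hsc
      · rw [hXt, hXf] at hsc
        have hcc := hA1 _ _ hsc
        rw [htau2] at hcc
        exact (hx1 i j hij).2 hcc
      · rw [hXt, hXt] at hsc; exact (hx1 i j hij).1 ((hA _ _).mp hsc)
  -- orbits as finsets
  set O : Fin (2 * n) → Finset (Fin (2 * n)) :=
    fun y => Finset.univ.filter (fun z => u.SameCycle y z) with hO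
  have hOsupp : ∀ y ∈ u.support, O y = (u.cycleOf y).support := by
    intro y hy
    ext z
    simp only [hO, Finset.mem_filter, Finset.mem_univ, true_and,
      mem_support_cycleOf_iff, hy, and_true]
  have hOfix : ∀ y, y ∉ u.support → O y = {y} := by
    intro y hy
    rw [notMem_support] at hy
    ext z
    simp only [hO, Finset.mem_filter, Finset.mem_univ, true_and, Finset.mem_singleton]
    constructor
    · rintro ⟨k, hk⟩
      rw [zpow_apply_eq_self_of_apply_eq_self hy k] at hk
      exact hk.symm
    · rintro rfl; exact SameCycle.refl _ _
  have hOcard : ∀ y, (O y).card = cycLen u y := by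
    intro y
    by_cases hy : y ∈ u.support
    · rw [hOsupp y hy, cycLen]
      have h2le := (isCycle_cycleOf u (mem_support.mp hy)).two_le_card_support
      omega
    · rw [hOfix y hy, cycLen, (cycleOf_eq_one_iff u).mpr (notMem_support.mp hy)]
      simp
  have hOtau : ∀ a, O (tau n a) = (O a).image (tau n) := by
    intro a
    ext z
    rw [Finset.mem_image]
    simp only [hO, Finset.mem_filter, Finset.mem_univ, true_and]
    constructor
    · intro hsc
      refine ⟨tau n z, ?_, htau2 z⟩
      have hcc := hA1 _ _ hsc
      rwa [htau2] at hcc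
    · rintro ⟨w, hw, rfl⟩
      exact hA1 _ _ hw
  have hOtaucard : ∀ a, (O (tau n a)).card = (O a).card := by
    intro a
    rw [hOtau a, Finset.card_image_of_injective _ (tau n).injective]
  have hXcard : ∀ p : Fin s × Bool, (O (X p)).card = lam p.1 := by
    rintro ⟨i, b⟩
    cases b
    · rw [hXf, hOcard, hlen]
    · rw [hXt, hOtaucard, hOcard, hlen]
  -- membership of representatives in the support
  have hsupp_iff : ∀ y, y ∈ u.support ↔ 2 ≤ (O y).card := by
    intro y
    constructor
    · intro hy
      rw [hOsupp y hy]
      exact (isCycle_cycleOf u (mem_support.mp hy)).two_le_card_support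
    · intro h2
      by_contra hy
      rw [hOfix y hy] at h2
      simp at h2
  have hsuppX : ∀ p : Fin s × Bool, X p ∈ u.support ↔ 2 ≤ lam p.1 := by
    intro p; rw [hsupp_iff, hXcard]
  -- Part 1: the sum
  have hcover : Finset.univ.biUnion (fun p : Fin s × Bool => O (X p)) = Finset.univ := by
    ext y
    simp only [Finset.mem_biUnion, Finset.mem_univ, true_and, iff_true]
    obtain ⟨i, hi | hi⟩ := hx3 y
    · refine ⟨(i, false), ?_⟩
      rw [hXf]
      simp only [hO, Finset.mem_filter, Finset.mem_univ, true_and]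
      exact hi.symm
    · refine ⟨(i, true), ?_⟩
      rw [hXt]
      simp only [hO, Finset.mem_filter, Finset.mem_univ, true_and]
      exact hi.symm
  have hdisjO : ∀ p ∈ (Finset.univ : Finset (Fin s × Bool)), ∀ q ∈ Finset.univ,
      p ≠ q → Disjoint (O (X p)) (O (X q)) := by
    intro p _ q _ hpq
    rw [Finset.disjoint_left]
    intro z hzp hzq
    simp only [hO, Finset.mem_filter, Finset.mem_univ, true_and] at hzp hzq
    exact hpair p q hpq (hzp.trans hzq.symm)
  have hsum2 : ∑ p : Fin s × Bool, lam p.1 = 2 * n := by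
    have := Finset.card_biUnion hdisjO
    rw [hcover] at this
    simp only [hXcard] at this
    rw [← this]
    simp [Finset.card_univ]
  have hsum : ∑ i, lam i = n := by
    rw [Fintype.sum_prod_type] at hsum2
    simp only [Fintype.sum_bool] at hsum2
    have h2 : ∑ i, (lam i + lam i) = 2 * n := by
      rw [← hsum2]
    rw [Finset.sum_add_distrib] at h2
    omega
  refine ⟨hsum, ?_⟩
  -- Part 2: the cycle type
  set T : Finset (Fin s) := Finset.univ.filter ((2 ≤ ·) ∘ lam) with hT
  have hTmem : ∀ i, i ∈ T ↔ 2 ≤ lam i := by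
    intro i
    rw [hT, Finset.mem_filter]
    simp [Function.comp]
  have hsuppcard : ∀ p : Fin s × Bool, 2 ≤ lam p.1 →
      (u.cycleOf (X p)).support.card = lam p.1 := by
    intro p hp
    have hmem : X p ∈ u.support := (hsuppX p).mpr hp
    have := hXcard p
    rwa [hOsupp _ hmem] at this
  set A : Bool → Finset (Perm (Fin (2 * n))) :=
    fun b => T.image (fun i => u.cycleOf (X (i, b))) with hAdef
  have hdisjA : Disjoint (A false) (A true) := by
    rw [Finset.disjoint_left]
    intro c hc hc'
    simp only [hAdef, Finset.mem_image] at hc hc'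
    obtain ⟨i, hi, rfl⟩ := hc
    obtain ⟨j, hj, heq⟩ := hc'
    replace heq : u.cycleOf (X (j, true)) = u.cycleOf (X (i, false)) := heq
    have hjX : X (j, true) ∈ u.support := (hsuppX _).mpr ((hTmem j).mp hj)
    have hself : X (j, true) ∈ (u.cycleOf (X (j, true))).support :=
      mem_support_cycleOf_iff.mpr ⟨SameCycle.refl _ _, hjX⟩
    rw [heq] at hself
    have := (mem_support_cycleOf_iff.mp hself).1
    exact hpair (i, false) (j, true) (by simp) this
  have hset : (A false).disjUnion (A true) hdisjA = u.cycleFactorsFinset := by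
    ext c
    rw [Finset.mem_disjUnion]
    constructor
    · rintro (hc | hc) <;>
      · simp only [hAdef, Finset.mem_image] at hc
        obtain ⟨i, hi, rfl⟩ := hc
        exact cycleOf_mem_cycleFactorsFinset_iff.mpr
          ((hsuppX _).mpr ((hTmem i).mp hi))
    · intro hc
      obtain ⟨hcyc, happ⟩ := (mem_cycleFactorsFinset_iff).mp hc
      obtain ⟨y, hy1, -⟩ := hcyc
      have hymem : y ∈ c.support := mem_support.mpr hy1
      have hcy : c = u.cycleOf y := cycle_is_cycleOf hymem hc
      have hyu : y ∈ u.support := by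
        rw [mem_support, ← happ y hymem]; exact hy1
      obtain ⟨i, hi | hi⟩ := hx3 y
      · have hXi : X (i, false) ∈ u.support := by
          rw [hXf]
          exact (hi.mem_support_iff).mp hyu
        left
        simp only [hAdef, Finset.mem_image]
        refine ⟨i, (hTmem i).mpr ((hsuppX (i, false)).mp hXi), ?_⟩
        rw [hcy, hXf]
        exact hi.cycleOf_eq.symm
      · have hXi : X (i, true) ∈ u.support := by
          rw [hXt]
          exact (hi.mem_support_iff).mp hyu
        right
        simp only [hAdef, Finset.mem_image]
        refine ⟨i, (hTmem i).mpr ((hsuppX (i, true)).mp hXi), ?_⟩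
        rw [hcy, hXt]
        exact hi.cycleOf_eq.symm
  have hinj : ∀ (b : Bool), ∀ i ∈ T, ∀ j ∈ T,
      u.cycleOf (X (i, b)) = u.cycleOf (X (j, b)) → i = j := by
    intro b i hi j hj heq
    by_contra hij
    have hiX : X (i, b) ∈ u.support := (hsuppX _).mpr ((hTmem i).mp hi)
    have hself : X (i, b) ∈ (u.cycleOf (X (i, b))).support :=
      mem_support_cycleOf_iff.mpr ⟨SameCycle.refl _ _, hiX⟩
    rw [heq] at hself
    have := (mem_support_cycleOf_iff.mp hself).1
    exact hpair (j, b) (i, b) (by simp [Ne.symm hij]) this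
  have hAval : ∀ b, (A b).val = T.val.map (fun i => u.cycleOf (X (i, b))) := by
    intro b
    exact Finset.image_val_of_injOn (fun i hi j hj h => hinj b i hi j hj h)
  have hmapped : ∀ b, (T.val.map (fun i => u.cycleOf (X (i, b)))).map
      (Finset.card ∘ support) = T.val.map lam := by
    intro b
    rw [Multiset.map_map]
    refine Multiset.map_congr rfl ?_
    intro i hi
    have hi' : 2 ≤ lam i := (hTmem i).mp hi
    exact hsuppcard (i, b) hi'
  have hfilter : Multiset.filter (2 ≤ ·) (Finset.univ.val.map lam) = T.val.map lam := by
    rw [Multiset.filter_map, hT, Finset.filter_val]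
  have hduval : ((A false).disjUnion (A true) hdisjA).val = (A false).val + (A true).val := rfl
  rw [cycleType_def, ← hset, hduval, Multiset.map_add,
    hAval false, hAval true, hmapped, hmapped, hfilter]
end
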